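/- Let C_{Γ(LS,2,1)} be the class of all Kripke models whose frame consists of exactly three worlds x, y, z with accessibility relation R = {(x,x),(y,y),(z,z),(y,z),(z,y),(x,y),(x,z)} (a root x below a two-element cluster {y,z}). Then C_{Γ(LS,2,1)} enjoys 2-IP. -/

import Mathlib

/-- Modal formulas over countably many variables. -/
inductive ModalForm : Type where
  | var : ℕ → ModalForm
  | bot : ModalForm
  | and : ModalForm → ModalForm → ModalForm
  | or : ModalForm → ModalForm → ModalForm
  | not : ModalForm → ModalForm
  | imp : ModalForm → ModalForm → ModalForm
  | box : ModalForm → ModalForm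

namespace ModalForm

mutual
  /-- positively occurring variables -/
  def vpos : ModalForm → Finset ℕ
    | var p => {p}
    | bot => ∅
    | and φ ψ => vpos φ ∪ vpos ψ
    | or φ ψ => vpos φ ∪ vpos ψ
    | not φ => vneg φ
    | imp φ ψ => vneg φ ∪ vpos ψ
    | box φ => vpos φ
  /-- negatively occurring variables -/
  def vneg : ModalForm → Finset ℕ
    | var _ => ∅
    | bot => ∅
    | and φ ψ => vneg φ ∪ vneg ψ
    | or φ ψ => vneg φ ∪ vneg ψ
    | not φ => vpos φ
    | imp φ ψ => vpos φ ∪ vneg ψ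
    | box φ => vneg φ
end

/-- Modal depth: maximal nesting of `□`. -/
def depth : ModalForm → ℕ
  | var _ => 0
  | bot => 0
  | and φ ψ => max (depth φ) (depth ψ)
  | or φ ψ => max (depth φ) (depth ψ)
  | not φ => depth φ
  | imp φ ψ => max (depth φ) (depth ψ)
  | box φ => depth φ + 1

/-- `◇φ := ¬□¬φ` -/
def dia (φ : ModalForm) : ModalForm := not (box (not φ))

/-- `⊤ := ¬⊥` -/
def top : ModalForm := not bot

end ModalForm

/-- An S4 Kripke frame: nonempty set of worlds with a reflexive transitive relation. -/
structure KFrame : Type 1 where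
  W : Type
  R : W → W → Prop
  nonempty : Nonempty W
  refl : ∀ x, R x x
  trans : ∀ x y z, R x y → R y z → R x z

/-- A Kripke model: a frame with a valuation. -/
structure KModel : Type 1 extends KFrame where
  val : W → ℕ → Prop

/-- The model based on frame `F` with valuation `V`. -/
def KFrame.toModel (F : KFrame) (V : F.W → ℕ → Prop) : KModel :=
  { toKFrame := F, val := V }

/-- Satisfaction in a Kripke model. -/
def KModel.Sat (M : KModel) : M.W → ModalForm → Prop
  | w, .var p => M.val w p
  | _, .bot => False
  | w, .and φ ψ => M.Sat w φ ∧ M.Sat w ψ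
  | w, .or φ ψ => M.Sat w φ ∨ M.Sat w ψ
  | w, .not φ => ¬ M.Sat w φ
  | w, .imp φ ψ => M.Sat w φ → M.Sat w ψ
  | w, .box φ => ∀ y, M.R w y → M.Sat y φ

/-- `(M0,w0) →ₙ^{(P⁺,P⁻)} (M1,w1)`: every `(P⁺,P⁻)`-formula of depth ≤ n
satisfied at `(M0,w0)` is satisfied at `(M1,w1)`. -/
def ModalArrow (Pp Pm : Finset ℕ) (n : ℕ) (M0 : KModel) (w0 : M0.W)
    (M1 : KModel) (w1 : M1.W) : Prop :=
  ∀ φ : ModalForm, φ.vpos ⊆ Pp → φ.vneg ⊆ Pm → φ.depth ≤ n →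
    M0.Sat w0 φ → M1.Sat w1 φ

/-- p-morphism between frames. -/
def PMorphism (F G : KFrame) (f : F.W → G.W) : Prop :=
  (∀ x y, F.R x y → G.R (f x) (f y)) ∧
  (∀ x w, G.R (f x) w → ∃ z, F.R x z ∧ f z = w)

/-- The class `C` of Kripke models enjoys `n`-IP. -/
def EnjoysIP (C : Set KModel) (n : ℕ) : Prop :=
  ∀ (Pp Pm : Finset ℕ) (M0 M1 : KModel), M0 ∈ C → M1 ∈ C →
    ∀ (w0 : M0.W) (w1 : M1.W), ModalArrow Pp Pm n M0 w0 M1 w1 →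
      ∃ (F : KFrame) (wstar : F.W) (f0 : F.W → M0.W) (f1 : F.W → M1.W),
        (∀ V : F.W → ℕ → Prop, F.toModel V ∈ C) ∧
        PMorphism F M0.toKFrame f0 ∧
        PMorphism F M1.toKFrame f1 ∧
        f0 wstar = w0 ∧ f1 wstar = w1 ∧
        ∀ x : F.W, ModalArrow Pp Pm 0 M0 (f0 x) M1 (f1 x)

/-- A world is final iff every successor is also a predecessor. -/
def KModel.Final (M : KModel) (w : M.W) : Prop := ∀ y, M.R w y → M.R y w

/-- The cluster of a world. -/
def KModel.cluster (M : KModel) (w : M.W) : Set M.W := {u | M.R w u ∧ M.R u w}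

/-- Cluster `C0` of `M0` matches cluster `C1` of `M1`. -/
def Matches (Pp Pm : Finset ℕ) (M0 M1 : KModel) (C0 : Set M0.W) (C1 : Set M1.W) : Prop :=
  (∀ u0 ∈ C0, ∃ u1 ∈ C1, ModalArrow Pp Pm 0 M0 u0 M1 u1) ∧
  (∀ u1 ∈ C1, ∃ u0 ∈ C0, ModalArrow Pp Pm 0 M0 u0 M1 u1)

/-- `φ` is satisfied at every world of every model in `C`. -/
def ValidOn (C : Set KModel) (φ : ModalForm) : Prop :=
  ∀ M ∈ C, ∀ w : M.W, M.Sat w φ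

/-- The class of Γ(LS,2,1) models: a root `x` below a two-element cluster `{y,z}`. -/
def C_LS21 : Set KModel :=
  {M | ∃ x y z : M.W, x ≠ y ∧ x ≠ z ∧ y ≠ z ∧
    (∀ w : M.W, w = x ∨ w = y ∨ w = z) ∧
    ∀ u v : M.W, M.R u v ↔
      (u = v ∨ (u = y ∧ v = z) ∨ (u = z ∧ v = y) ∨ (u = x ∧ v = y) ∨ (u = x ∧ v = z))}

/-!
Every world of a `C_LS21` model sees exactly itself and the final two-element cluster, so the
three-world frame maps onto both models by p-morphisms that send the root to `w0`, `w1` and the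
cluster onto the clusters, as soon as the two clusters are paired bijectively by depth-`0`
`(P⁺, P⁻)`-types. Depth `2` forces such a pairing. Write `δ u` (`charForm`) for the conjunction
of the literals true at `u`. For a cluster world `u0` of `M0`, `□◇δ u0` holds at `w0`, hence at
`w1`, and gives `u0` a partner in the cluster of `M1`. Also `◇□(δ y0 ∨ δ z0)` holds at `w0`,
hence at `w1`, and gives every cluster world of `M1` a partner. A relation between two
2-element sets that leaves no point without a partner contains a bijection.
-/

namespace ModalForm

def conj (l : List ModalForm) : ModalForm := l.foldr and top

variable {S : Finset ℕ}

theorem vpos_conj_subset {l : List ModalForm} (h : ∀ φ ∈ l, φ.vpos ⊆ S) :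
    (conj l).vpos ⊆ S := by
  induction l with
  | nil => simp [conj, top, vpos, vneg]
  | cons φ l ih =>
    rw [List.forall_mem_cons] at h
    exact Finset.union_subset h.1 (ih h.2)

theorem vneg_conj_subset {l : List ModalForm} (h : ∀ φ ∈ l, φ.vneg ⊆ S) :
    (conj l).vneg ⊆ S := by
  induction l with
  | nil => simp [conj, top, vpos, vneg]
  | cons φ l ih =>
    rw [List.forall_mem_cons] at h
    exact Finset.union_subset h.1 (ih h.2)

theorem depth_conj {l : List ModalForm} (h : ∀ φ ∈ l, φ.depth = 0) : (conj l).depth = 0 := by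
  induction l with
  | nil => simp [conj, top, depth]
  | cons φ l ih => simp_all [conj, depth]

open Classical in
noncomputable def charForm (Pp Pm : Finset ℕ) (M : KModel) (u : M.W) : ModalForm :=
  conj ((Pp.filter (M.val u)).toList.map var ++
    (Pm.filter (¬ M.val u ·)).toList.map (not ∘ var))

variable {Pp Pm : Finset ℕ} {M : KModel} {u : M.W}

theorem vpos_charForm_subset : (charForm Pp Pm M u).vpos ⊆ Pp := by
  classical
  refine vpos_conj_subset fun φ hφ => ?_
  simp only [List.mem_append, List.mem_map, Finset.mem_toList, Finset.mem_filter] at hφ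
  rcases hφ with ⟨p, ⟨hp, -⟩, rfl⟩ | ⟨p, ⟨hp, -⟩, rfl⟩ <;> simp [vpos, vneg, hp]

theorem vneg_charForm_subset : (charForm Pp Pm M u).vneg ⊆ Pm := by
  classical
  refine vneg_conj_subset fun φ hφ => ?_
  simp only [List.mem_append, List.mem_map, Finset.mem_toList, Finset.mem_filter] at hφ
  rcases hφ with ⟨p, ⟨hp, -⟩, rfl⟩ | ⟨p, ⟨hp, -⟩, rfl⟩ <;> simp [vpos, vneg, hp]

theorem depth_charForm : (charForm Pp Pm M u).depth = 0 := by
  classical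
  refine depth_conj fun φ hφ => ?_
  simp only [List.mem_append, List.mem_map] at hφ
  rcases hφ with ⟨p, -, rfl⟩ | ⟨p, -, rfl⟩ <;> rfl

end ModalForm

open ModalForm

namespace KModel

theorem sat_conj (M : KModel) (w : M.W) (l : List ModalForm) :
    M.Sat w (conj l) ↔ ∀ φ ∈ l, M.Sat w φ := by
  induction l with
  | nil => simp [conj, top, Sat]
  | cons φ l ih => simp [conj, Sat, ← ih]

theorem sat_dia (M : KModel) (w : M.W) (φ : ModalForm) :
    M.Sat w (dia φ) ↔ ∃ v, M.R w v ∧ M.Sat v φ := by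
  simp [dia, Sat]

end KModel

/-- Negation swaps the roles of the two models and of `Pp`, `Pm`, which is why the induction
generalizes over all of them. -/
theorem KModel.sat_of_literals {Pp Pm : Finset ℕ} {M0 M1 : KModel} {u : M0.W} {v : M1.W}
    (hpos : ∀ p ∈ Pp, M0.val u p → M1.val v p) (hneg : ∀ p ∈ Pm, M1.val v p → M0.val u p)
    {φ : ModalForm} (hd : φ.depth = 0) (hp : φ.vpos ⊆ Pp) (hm : φ.vneg ⊆ Pm)
    (hu : M0.Sat u φ) : M1.Sat v φ := by
  induction φ generalizing Pp Pm M0 M1 u v with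
  | var p => exact hpos p (hp (Finset.mem_singleton_self p)) hu
  | bot => exact hu
  | and φ ψ ihφ ihψ =>
    simp only [depth, Nat.max_eq_zero_iff, vpos, vneg, Finset.union_subset_iff] at hd hp hm
    exact ⟨ihφ hpos hneg hd.1 hp.1 hm.1 hu.1, ihψ hpos hneg hd.2 hp.2 hm.2 hu.2⟩
  | or φ ψ ihφ ihψ =>
    simp only [depth, Nat.max_eq_zero_iff, vpos, vneg, Finset.union_subset_iff] at hd hp hm
    exact hu.imp (ihφ hpos hneg hd.1 hp.1 hm.1) (ihψ hpos hneg hd.2 hp.2 hm.2)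
  | not φ ih =>
    simp only [depth, vpos, vneg] at hd hp hm
    exact fun hv => hu (ih hneg hpos hd hm hp hv)
  | imp φ ψ ihφ ihψ =>
    simp only [depth, Nat.max_eq_zero_iff, vpos, vneg, Finset.union_subset_iff] at hd hp hm
    exact fun hv => ihψ hpos hneg hd.2 hp.2 hm.2 (hu (ihφ hneg hpos hd.1 hm.1 hp.1 hv))
  | box φ => simp [depth] at hd

section ModalArrow

variable {Pp Pm : Finset ℕ} {M0 M1 : KModel} {w0 : M0.W} {w1 : M1.W}

theorem ModalArrow.mono {m n : ℕ} (h : ModalArrow Pp Pm n M0 w0 M1 w1) (hmn : m ≤ n) :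
    ModalArrow Pp Pm m M0 w0 M1 w1 :=
  fun φ hp hm hd => h φ hp hm (hd.trans hmn)

theorem modalArrow_zero_iff :
    ModalArrow Pp Pm 0 M0 w0 M1 w1 ↔
      (∀ p ∈ Pp, M0.val w0 p → M1.val w1 p) ∧ (∀ p ∈ Pm, M1.val w1 p → M0.val w0 p) := by
  refine ⟨fun h => ⟨fun p hp => h (var p) ?_ (by simp [vneg]) le_rfl,
    fun p hp hv => by_contra fun hu => h (not (var p)) (by simp [vpos, vneg]) ?_ le_rfl hu hv⟩,
    fun ⟨hpos, hneg⟩ φ hp hm hd => KModel.sat_of_literals hpos hneg (Nat.le_zero.mp hd) hp hm⟩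
  all_goals simpa [vpos, vneg] using hp

theorem sat_charForm_iff {u : M0.W} :
    M1.Sat w1 (charForm Pp Pm M0 u) ↔ ModalArrow Pp Pm 0 M0 u M1 w1 := by
  classical
  rw [modalArrow_zero_iff, charForm, KModel.sat_conj]
  simp only [List.forall_mem_append, List.forall_mem_map, Finset.mem_toList, Finset.mem_filter,
    Function.comp, KModel.Sat, and_imp]
  exact and_congr Iff.rfl (forall₂_congr fun p _ => not_imp_not)

theorem sat_charForm_self (u : M0.W) : M0.Sat u (charForm Pp Pm M0 u) :=
  sat_charForm_iff.mpr fun _ _ _ _ h => h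

/-- Transfer of `□◇ charForm u0`. -/
theorem ModalArrow.exists_rel_modalArrow_zero (h : ModalArrow Pp Pm 2 M0 w0 M1 w1) {u0 : M0.W}
    (hu0 : ∀ a, M0.R w0 a → M0.R a u0) {b : M1.W} (hb : M1.R w1 b) :
    ∃ v, M1.R b v ∧ ModalArrow Pp Pm 0 M0 u0 M1 v := by
  have h0 : M0.Sat w0 (box (dia (charForm Pp Pm M0 u0))) := fun a ha =>
    (KModel.sat_dia _ _ _).mpr ⟨u0, hu0 a ha, sat_charForm_self u0⟩
  have h1 := h _ (by simpa [dia, vpos, vneg] using vpos_charForm_subset)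
    (by simpa [dia, vpos, vneg] using vneg_charForm_subset)
    (by simp [dia, depth, depth_charForm]) h0 b hb
  simpa only [KModel.sat_dia, sat_charForm_iff] using h1

/-- Transfer of `◇□(charForm y0 ∨ charForm z0)`. -/
theorem ModalArrow.modalArrow_zero_or (h : ModalArrow Pp Pm 2 M0 w0 M1 w1) {y0 z0 : M0.W}
    (hy0 : M0.R w0 y0) (hsucc : ∀ v, M0.R y0 v → v = y0 ∨ v = z0) {v1 : M1.W}
    (hv1 : ∀ a, M1.R w1 a → M1.R a v1) :
    ModalArrow Pp Pm 0 M0 y0 M1 v1 ∨ ModalArrow Pp Pm 0 M0 z0 M1 v1 := by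
  have h0 : M0.Sat w0 (dia (box (or (charForm Pp Pm M0 y0) (charForm Pp Pm M0 z0)))) := by
    refine (KModel.sat_dia _ _ _).mpr ⟨y0, hy0, fun v hv => ?_⟩
    rcases hsucc v hv with rfl | rfl
    exacts [Or.inl (sat_charForm_self v), Or.inr (sat_charForm_self v)]
  have h1 := h _
    (by simpa [dia, vpos, vneg] using Finset.union_subset vpos_charForm_subset vpos_charForm_subset)
    (by simpa [dia, vpos, vneg] using Finset.union_subset vneg_charForm_subset vneg_charForm_subset)
    (by simp [dia, depth, depth_charForm]) h0
  obtain ⟨a, ha, hbox⟩ := (KModel.sat_dia _ _ _).mp h1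
  simpa only [KModel.Sat, sat_charForm_iff] using hbox v1 (hv1 a ha)

end ModalArrow

theorem exists_rel_iff_of_mem_C_LS21 {M : KModel} (hM : M ∈ C_LS21) :
    ∃ y z : M.W, ∀ u v, M.R u v ↔ v = u ∨ v = y ∨ v = z := by
  obtain ⟨x, y, z, hxy, hxz, -, htot, hR⟩ := hM
  refine ⟨y, z, fun u v => (hR u v).trans ?_⟩
  rcases htot u with rfl | rfl | rfl <;> rcases htot v with rfl | rfl | rfl <;> simp_all [eq_comm]

/-- Root `0` below the cluster `{1, 2}`. -/
def LS21Frame : KFrame where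
  W := Fin 3
  R a b := b = 0 → a = 0
  nonempty := ⟨0⟩
  refl _ := id
  trans _ _ _ hab hbc := hab ∘ hbc

theorem LS21Frame.toModel_mem (V : LS21Frame.W → ℕ → Prop) : LS21Frame.toModel V ∈ C_LS21 := by
  have h : (0 : Fin 3) ≠ 1 ∧ (0 : Fin 3) ≠ 2 ∧ (1 : Fin 3) ≠ 2 ∧
      (∀ w : Fin 3, w = 0 ∨ w = 1 ∨ w = 2) ∧ ∀ u v : Fin 3, (v = 0 → u = 0) ↔
        (u = v ∨ (u = 1 ∧ v = 2) ∨ (u = 2 ∧ v = 1) ∨ (u = 0 ∧ v = 1) ∨ (u = 0 ∧ v = 2)) := by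
    decide
  exact ⟨(0 : Fin 3), (1 : Fin 3), (2 : Fin 3), h⟩

theorem pMorphism_LS21Frame {M : KModel} {y z : M.W}
    (hR : ∀ u v, M.R u v ↔ v = u ∨ v = y ∨ v = z) (r : M.W) :
    PMorphism LS21Frame M.toKFrame ![r, y, z] := by
  refine ⟨fun (a b : Fin 3) hab => (hR _ _).mpr ?_, fun a w haw => ?_⟩
  · fin_cases a <;> fin_cases b <;> simp_all [LS21Frame]
  · rcases (hR _ _).mp haw with rfl | rfl | rfl
    exacts [⟨a, LS21Frame.refl a, rfl⟩, ⟨(1 : Fin 3), fun h => absurd h (by decide), rfl⟩,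
      ⟨(2 : Fin 3), fun h => absurd h (by decide), rfl⟩]

theorem ModalArrow.exists_cluster_matching {Pp Pm : Finset ℕ} {M0 M1 : KModel} {w0 : M0.W}
    {w1 : M1.W} {y0 z0 : M0.W} {y1 z1 : M1.W} (h : ModalArrow Pp Pm 2 M0 w0 M1 w1)
    (hR0 : ∀ u v, M0.R u v ↔ v = u ∨ v = y0 ∨ v = z0)
    (hR1 : ∀ u v, M1.R u v ↔ v = u ∨ v = y1 ∨ v = z1) :
    ∃ y1' z1' : M1.W, (∀ u v, M1.R u v ↔ v = u ∨ v = y1' ∨ v = z1') ∧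
      ModalArrow Pp Pm 0 M0 y0 M1 y1' ∧ ModalArrow Pp Pm 0 M0 z0 M1 z1' := by
  have row (u0 : M0.W) (hu0 : ∀ a, M0.R a u0) :
      ModalArrow Pp Pm 0 M0 u0 M1 y1 ∨ ModalArrow Pp Pm 0 M0 u0 M1 z1 := by
    obtain ⟨v, hv, hA⟩ :=
      h.exists_rel_modalArrow_zero (fun a _ => hu0 a) ((hR1 w1 y1).mpr (by simp))
    rcases (hR1 _ _).mp hv with rfl | rfl | rfl <;> simp [hA]
  have col (v1 : M1.W) (hv1 : ∀ a, M1.R a v1) :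
      ModalArrow Pp Pm 0 M0 y0 M1 v1 ∨ ModalArrow Pp Pm 0 M0 z0 M1 v1 :=
    h.modalArrow_zero_or ((hR0 _ _).mpr (by simp))
      (fun v hv => by rcases (hR0 _ _).mp hv with hv | hv | hv <;> simp [hv]) (fun a _ => hv1 a)
  have row_y0 := row y0 (by simp [hR0])
  have row_z0 := row z0 (by simp [hR0])
  have col_y1 := col y1 (by simp [hR1])
  have col_z1 := col z1 (by simp [hR1])
  have hmatch : (ModalArrow Pp Pm 0 M0 y0 M1 y1 ∧ ModalArrow Pp Pm 0 M0 z0 M1 z1) ∨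
      (ModalArrow Pp Pm 0 M0 y0 M1 z1 ∧ ModalArrow Pp Pm 0 M0 z0 M1 y1) := by
    tauto
  rcases hmatch with ⟨hy, hz⟩ | ⟨hy, hz⟩
  exacts [⟨y1, z1, hR1, hy, hz⟩, ⟨z1, y1, fun u v => by rw [hR1]; tauto, hy, hz⟩]

theorem stmt10 : EnjoysIP C_LS21 2 := by
  intro Pp Pm M0 M1 hM0 hM1 w0 w1 h
  obtain ⟨y0, z0, hR0⟩ := exists_rel_iff_of_mem_C_LS21 hM0
  obtain ⟨_, _, hR1⟩ := exists_rel_iff_of_mem_C_LS21 hM1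
  obtain ⟨y1, z1, hR1, hy, hz⟩ := h.exists_cluster_matching hR0 hR1
  refine ⟨LS21Frame, (0 : Fin 3), ![w0, y0, z0], ![w1, y1, z1], LS21Frame.toModel_mem,
    pMorphism_LS21Frame hR0 w0, pMorphism_LS21Frame hR1 w1, rfl, rfl, fun (a : Fin 3) => ?_⟩
  fin_cases a
  exacts [h.mono (by norm_num), hy, hz]
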